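/- arXiv:1909.12580 — 2 statements merged into one kernel-verified Lean document; each statement's English description precedes it below -/
import Mathlib

section
/- Let A ∈ ℝ^{n×d} and Ã ∈ ℝ^{m×d} satisfy (1−ε)‖Ax‖₂² ≤ ‖Ãx‖₂² ≤ (1+ε)‖Ax‖₂² for all x, with 0 ≤ ε < 1. Let Ṽ_k be the matrix of top-k right singular vectors of Ã and set Â_k = A Ṽ_k Ṽ_kᵀ. Then ‖A − Â_k‖₂² ≤ ((1+ε)/(1−ε))·‖A − A_k‖₂², where A_k is the best rank-k approximation of A in spectral norm. -/
open Matrix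

/-- Squared Euclidean norm of a vector. -/
noncomputable def sqnorm2 {n : ℕ} (v : Fin n → ℝ) : ℝ := ∑ i, (v i) ^ 2

/-- The square of the k-th largest singular value of a matrix (1-indexed),
via the Courant–Fischer max-min characterization. -/
noncomputable def svalSq {n d : ℕ} (A : Matrix (Fin n) (Fin d) ℝ) (k : ℕ) : ℝ :=
  sSup {c | ∃ W : Submodule ℝ (Fin d → ℝ), Module.finrank ℝ W = k ∧
    c = sInf {r : ℝ | ∃ x ∈ W, sqnorm2 x = 1 ∧ r = sqnorm2 (A.mulVec x)}}

/-- The square of the spectral (operator) norm of a matrix. -/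
noncomputable def opNormSq {m n : ℕ} (M : Matrix (Fin m) (Fin n) ℝ) : ℝ :=
  sSup {c | ∃ x : Fin n → ℝ, sqnorm2 x = 1 ∧ c = sqnorm2 (M.mulVec x)}

/- ### auxiliary lemmas -/

lemma sqnorm2_nonneg {n : ℕ} (v : Fin n → ℝ) : 0 ≤ sqnorm2 v :=
  Finset.sum_nonneg fun i _ => sq_nonneg _

lemma sqnorm2_eq_dot {n : ℕ} (v : Fin n → ℝ) : sqnorm2 v = v ⬝ᵥ v := by
  simp [sqnorm2, dotProduct, sq]

lemma sqnorm2_smul {n : ℕ} (c : ℝ) (v : Fin n → ℝ) :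
    sqnorm2 (c • v) = c ^ 2 * sqnorm2 v := by
  simp [sqnorm2, Finset.mul_sum, mul_pow]

lemma sqnorm2_pos {n : ℕ} {v : Fin n → ℝ} (h : v ≠ 0) : 0 < sqnorm2 v := by
  obtain ⟨i, hi⟩ : ∃ i, v i ≠ 0 := by
    by_contra hc
    push_neg at hc
    exact h (funext hc)
  have h1 : 0 < (v i) ^ 2 := by positivity
  exact lt_of_lt_of_le h1 (Finset.single_le_sum (fun j _ => sq_nonneg (v j)) (Finset.mem_univ i))

lemma sqnorm2_mulVec_eq {n d : ℕ} (A : Matrix (Fin n) (Fin d) ℝ) (x : Fin d → ℝ) :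
    sqnorm2 (A.mulVec x) = x ⬝ᵥ (Aᵀ * A).mulVec x := by
  rw [sqnorm2_eq_dot, ← mulVec_mulVec, dotProduct_mulVec x Aᵀ, vecMul_transpose]

/-- Frobenius norm squared. -/
noncomputable def frob {n d : ℕ} (A : Matrix (Fin n) (Fin d) ℝ) : ℝ := ∑ i, ∑ j, (A i j) ^ 2

lemma frob_nonneg {n d : ℕ} (A : Matrix (Fin n) (Fin d) ℝ) : 0 ≤ frob A :=
  Finset.sum_nonneg fun _ _ => Finset.sum_nonneg fun _ _ => sq_nonneg _

lemma sqnorm2_mulVec_le {n d : ℕ} (A : Matrix (Fin n) (Fin d) ℝ) (x : Fin d → ℝ) :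
    sqnorm2 (A.mulVec x) ≤ frob A * sqnorm2 x := by
  unfold sqnorm2 frob mulVec dotProduct
  rw [Finset.sum_mul]
  exact Finset.sum_le_sum fun i _ => Finset.sum_mul_sq_le_sq_mul_sq _ _ _

/-- The defining set of `svalSq` is bounded above. -/
lemma svalSq_bddAbove {n d : ℕ} (A : Matrix (Fin n) (Fin d) ℝ) (k : ℕ) :
    BddAbove {c | ∃ W : Submodule ℝ (Fin d → ℝ), Module.finrank ℝ W = k ∧
      c = sInf {r : ℝ | ∃ x ∈ W, sqnorm2 x = 1 ∧ r = sqnorm2 (A.mulVec x)}} := by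
  refine ⟨frob A, ?_⟩
  rintro c ⟨W, hW, rfl⟩
  set S := {r : ℝ | ∃ x ∈ W, sqnorm2 x = 1 ∧ r = sqnorm2 (A.mulVec x)} with hS
  rcases S.eq_empty_or_nonempty with h | ⟨r, x, hxW, hx1, hr⟩
  · rw [h, Real.sInf_empty]; exact frob_nonneg A
  · refine csInf_le_of_le ⟨0, ?_⟩ ⟨x, hxW, hx1, hr⟩ ?_
    · rintro s ⟨y, _, _, rfl⟩; exact sqnorm2_nonneg _
    · rw [hr]
      calc sqnorm2 (A.mulVec x) ≤ frob A * sqnorm2 x := sqnorm2_mulVec_le A x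
        _ = frob A := by rw [hx1, mul_one]

lemma sum_dotProduct' {n N : ℕ} (f : Fin N → Fin n → ℝ) (v : Fin n → ℝ) :
    (∑ i, f i) ⬝ᵥ v = ∑ i, f i ⬝ᵥ v := by
  simp only [dotProduct, Finset.sum_apply, Finset.sum_mul]
  exact Finset.sum_comm

lemma dotProduct_sum' {n N : ℕ} (v : Fin n → ℝ) (f : Fin N → Fin n → ℝ) :
    v ⬝ᵥ (∑ i, f i) = ∑ i, v ⬝ᵥ f i := by
  simp only [dotProduct, Finset.sum_apply, Finset.mul_sum]
  exact Finset.sum_comm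

/-- an orthonormal family (w.r.t. dot product) is linearly independent. -/
lemma li_of_ortho {d N : ℕ} (u : Fin N → Fin d → ℝ)
    (h : ∀ i j, u i ⬝ᵥ u j = if i = j then 1 else 0) :
    LinearIndependent ℝ u := by
  rw [Fintype.linearIndependent_iff]
  intro g hg i
  have h2 : (∑ j, g j • u j) ⬝ᵥ u i = 0 := by rw [hg]; simp
  rw [sum_dotProduct'] at h2
  simp only [smul_dotProduct, h, smul_eq_mul, mul_ite, mul_one, mul_zero] at h2
  rwa [Finset.sum_ite_eq' Finset.univ i g, if_pos (Finset.mem_univ i)] at h2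

/-- a submodule of positive rank contains a unit vector. -/
lemma exists_unit_vec {d : ℕ} (W : Submodule ℝ (Fin d → ℝ)) (hW : 0 < Module.finrank ℝ W) :
    ∃ x ∈ W, sqnorm2 x = 1 := by
  have hbot : W ≠ ⊥ := by
    intro h
    rw [h, finrank_bot] at hW
    exact lt_irrefl 0 hW
  obtain ⟨x, hxW, hx0⟩ := Submodule.exists_mem_ne_zero_of_ne_bot hbot
  have hpos := sqnorm2_pos hx0
  refine ⟨(Real.sqrt (sqnorm2 x))⁻¹ • x, W.smul_mem _ hxW, ?_⟩
  rw [sqnorm2_smul, inv_pow, Real.sq_sqrt hpos.le, inv_mul_cancel₀ hpos.ne']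

/-- membership in the svalSq index set coming from a span of an orthonormal family. -/
lemma sInf_mem_svalSq_set {n d N : ℕ} (A : Matrix (Fin n) (Fin d) ℝ)
    (u : Fin N → Fin d → ℝ)
    (h : ∀ i j, u i ⬝ᵥ u j = if i = j then 1 else 0) :
    sInf {r : ℝ | ∃ x ∈ Submodule.span ℝ (Set.range u), sqnorm2 x = 1 ∧
        r = sqnorm2 (A.mulVec x)} ∈
      {c | ∃ W : Submodule ℝ (Fin d → ℝ), Module.finrank ℝ W = N ∧
        c = sInf {r : ℝ | ∃ x ∈ W, sqnorm2 x = 1 ∧ r = sqnorm2 (A.mulVec x)}} := by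
  refine ⟨Submodule.span ℝ (Set.range u), ?_, rfl⟩
  rw [finrank_span_eq_card (li_of_ortho u h), Fintype.card_fin]

/-- `svalSq A j ≥ 0` when `0 < j ≤ d`. -/
lemma svalSq_nonneg {n d : ℕ} (A : Matrix (Fin n) (Fin d) ℝ) {j : ℕ} (hj : 0 < j)
    (hjd : j ≤ d) : 0 ≤ svalSq A j := by
  set u : Fin j → Fin d → ℝ := fun i => Pi.single (Fin.castLE hjd i) 1 with hu
  have hortho : ∀ i i', u i ⬝ᵥ u i' = if i = i' then 1 else 0 := by
    intro i i'
    rw [hu]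
    simp only [dotProduct_single, mul_one, Pi.single_apply]
    by_cases h : i = i'
    · simp [h]
    · have h2 : Fin.castLE hjd i' ≠ Fin.castLE hjd i := fun hc => h (Fin.castLE_injective hjd hc).symm
      rw [if_neg h2, if_neg h]
  have hmem := sInf_mem_svalSq_set A u hortho
  have hle := le_csSup (svalSq_bddAbove A j) hmem
  refine le_trans ?_ hle
  apply Real.sInf_nonneg
  rintro r ⟨x, _, _, rfl⟩
  exact sqnorm2_nonneg _

/-- Key lemma: if `v` is an orthonormal family of eigenvectors of `AtᵀAt` with
eigenvalues `svalSq At (j+1)`, and `w` is a unit vector orthogonal to all `v j`,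
then `‖At w‖² ≤ svalSq At (j+1)` for all `j ≤ k`. -/
lemma mulVec_sum' {n d N : ℕ} (M : Matrix (Fin n) (Fin d) ℝ) (f : Fin N → Fin d → ℝ) :
    M.mulVec (∑ i, f i) = ∑ i, M.mulVec (f i) := by
  simp only [← Matrix.mulVecLin_apply]
  exact map_sum _ _ _

/-- Key lemma: if `v` is an orthonormal family of eigenvectors of `AtᵀAt` with
eigenvalues `svalSq At (j+1)`, and `w` is a unit vector orthogonal to all `v j`,
then `‖At w‖² ≤ svalSq At (j+1)` for all `j ≤ k`. -/
lemma key {m d k : ℕ} (At : Matrix (Fin m) (Fin d) ℝ)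
    (v : Fin k → Fin d → ℝ)
    (hortho : ∀ i j, v i ⬝ᵥ v j = if i = j then 1 else 0)
    (heig : ∀ j, (Atᵀ * At).mulVec (v j) = svalSq At ((j : ℕ) + 1) • v j)
    (w : Fin d → ℝ) (hw1 : sqnorm2 w = 1) (hwv : ∀ j, v j ⬝ᵥ w = 0) :
    ∀ j, j ≤ k → sqnorm2 (At.mulVec w) ≤ svalSq At (j + 1) := by
  have hsymm_dot : ∀ a b : Fin d → ℝ, a ⬝ᵥ (Atᵀ * At).mulVec b = (Atᵀ * At).mulVec a ⬝ᵥ b := by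
    intro a b
    rw [dotProduct_mulVec]
    congr 1
    conv_lhs => rw [show Atᵀ * At = (Atᵀ * At)ᵀ by rw [transpose_mul, transpose_transpose],
      vecMul_transpose]
  intro j
  induction j using Nat.strong_induction_on with
  | _ j IH =>
    intro hjk
    set q := sqnorm2 (At.mulVec w) with hq
    -- the orthonormal family: first j columns of v, then w
    set u : Fin (j + 1) → Fin d → ℝ :=
      fun i => if h : (i : ℕ) < j then v ⟨i, lt_of_lt_of_le h hjk⟩ else w with hu
    have hulast : ∀ i : Fin (j+1), ¬ (i : ℕ) < j → u i = w := by
      intro i hi; rw [hu]; simp [hi]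
    have hulo : ∀ (i : Fin (j+1)) (h : (i : ℕ) < j),
        u i = v ⟨i, lt_of_lt_of_le h hjk⟩ := by
      intro i h; rw [hu]; simp [h]
    have huortho : ∀ i i', u i ⬝ᵥ u i' = if i = i' then 1 else 0 := by
      intro i i'
      by_cases h1 : (i : ℕ) < j <;> by_cases h2 : (i' : ℕ) < j
      · rw [hulo i h1, hulo i' h2, hortho]
        simp only [Fin.mk.injEq]
        by_cases h : i = i'
        · subst h; simp
        · rw [if_neg (fun hc => h (Fin.ext hc)), if_neg h]
      · rw [hulo i h1, hulast i' h2, hwv,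
          if_neg (fun hc : i = i' => h2 (by rw [← hc]; exact h1))]
      · rw [hulast i h1, hulo i' h2, dotProduct_comm, hwv,
          if_neg (fun hc : i = i' => h1 (by rw [hc]; exact h2))]
      · have hii : i = i' := Fin.ext (by have := i.isLt; have := i'.isLt; omega)
        rw [hulast i h1, hulast i' h2, if_pos hii, ← sqnorm2_eq_dot]
        exact hw1
    -- eigenvalues of the quadratic form on the family
    set mu : Fin (j + 1) → ℝ :=
      fun i => if (i : ℕ) < j then svalSq At ((i : ℕ) + 1) else q with hmu
    have hmuq : ∀ i, q ≤ mu i := by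
      intro i
      simp only [hmu]
      by_cases h : (i : ℕ) < j
      · simp only [if_pos h]
        exact IH (i : ℕ) h (le_trans (le_of_lt h) hjk)
      · simp only [if_neg h]
        exact le_refl q
    have hMu : ∀ i i', u i ⬝ᵥ (Atᵀ * At).mulVec (u i') = if i = i' then mu i' else 0 := by
      intro i i'
      by_cases h2 : (i' : ℕ) < j
      · rw [hulo i' h2, heig, dotProduct_smul, ← hulo i' h2, huortho i i']
        by_cases h : i = i'
        · rw [if_pos h, if_pos h]
          simp [hmu, h2]
        · rw [if_neg h, if_neg h, smul_zero]
      · rw [hulast i' h2]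
        by_cases h1 : (i : ℕ) < j
        · have hne : i ≠ i' := fun hc => h2 (by rw [← hc]; exact h1)
          rw [if_neg hne, hulo i h1, hsymm_dot, heig, smul_dotProduct, hwv, smul_zero]
        · have hii : i = i' := Fin.ext (by have := i.isLt; have := i'.isLt; omega)
          rw [hulast i h1, if_pos hii]
          simp only [hmu, if_neg h2]
          rw [← sqnorm2_mulVec_eq]
    -- core: every unit x in the span has q ≤ ‖At x‖²
    have hcore : ∀ x ∈ Submodule.span ℝ (Set.range u), sqnorm2 x = 1 →
        q ≤ sqnorm2 (At.mulVec x) := by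
      intro x hx hx1
      obtain ⟨c, rfl⟩ := (Submodule.mem_span_range_iff_exists_fun ℝ).mp hx
      have hexp : sqnorm2 (At.mulVec (∑ i, c i • u i)) = ∑ i, c i ^ 2 * mu i := by
        rw [sqnorm2_mulVec_eq]
        have hMv : (Atᵀ * At).mulVec (∑ i, c i • u i) =
            ∑ i, c i • (Atᵀ * At).mulVec (u i) := by
          rw [mulVec_sum']
          exact Finset.sum_congr rfl fun i _ => by rw [mulVec_smul]
        rw [hMv, dotProduct_sum']
        refine Finset.sum_congr rfl fun i' _ => ?_
        rw [sum_dotProduct']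
        have hterm : ∀ i, (c i • u i) ⬝ᵥ (c i' • (Atᵀ * At).mulVec (u i')) =
            if i' = i then c i ^ 2 * mu i else 0 := by
          intro i
          rw [smul_dotProduct, dotProduct_smul, hMu i i']
          by_cases h : i = i'
          · subst h
            rw [if_pos rfl, if_pos rfl]
            simp only [smul_eq_mul]; ring
          · rw [if_neg h, if_neg (fun hc => h hc.symm)]
            simp
        rw [Finset.sum_congr rfl fun i _ => hterm i, Finset.sum_ite_eq Finset.univ i',
          if_pos (Finset.mem_univ i')]
      have hsq : sqnorm2 (∑ i, c i • u i) = ∑ i, c i ^ 2 := by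
        rw [sqnorm2_eq_dot, sum_dotProduct']
        refine Finset.sum_congr rfl fun i _ => ?_
        rw [dotProduct_sum']
        have hterm : ∀ i', (c i • u i) ⬝ᵥ (c i' • u i') = if i = i' then c i ^ 2 else 0 := by
          intro i'
          rw [smul_dotProduct, dotProduct_smul, huortho i i']
          by_cases h : i = i'
          · subst h; rw [if_pos rfl, if_pos rfl]
            simp only [smul_eq_mul]; ring
          · rw [if_neg h, if_neg h]; simp
        rw [Finset.sum_congr rfl fun i' _ => hterm i', Finset.sum_ite_eq Finset.univ i,
          if_pos (Finset.mem_univ i)]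
      rw [hexp]
      have hsum1 : ∑ i, c i ^ 2 = 1 := by rw [← hsq, hx1]
      calc q = q * ∑ i, c i ^ 2 := by rw [hsum1, mul_one]
        _ = ∑ i, c i ^ 2 * q := by
            rw [Finset.mul_sum]
            exact Finset.sum_congr rfl fun i _ => mul_comm _ _
        _ ≤ ∑ i, c i ^ 2 * mu i :=
            Finset.sum_le_sum fun i _ => mul_le_mul_of_nonneg_left (hmuq i) (sq_nonneg _)
    -- w itself is a unit vector in the span
    have hwmem : w ∈ Submodule.span ℝ (Set.range u) := by
      apply Submodule.subset_span
      refine ⟨⟨j, Nat.lt_succ_self j⟩, ?_⟩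
      rw [hulast ⟨j, Nat.lt_succ_self j⟩ (by simp)]
    have hSne : {r : ℝ | ∃ x ∈ Submodule.span ℝ (Set.range u), sqnorm2 x = 1 ∧
        r = sqnorm2 (At.mulVec x)}.Nonempty := ⟨q, w, hwmem, hw1, rfl⟩
    have hqle : q ≤ sInf {r : ℝ | ∃ x ∈ Submodule.span ℝ (Set.range u), sqnorm2 x = 1 ∧
        r = sqnorm2 (At.mulVec x)} := by
      refine le_csInf hSne ?_
      rintro r ⟨x, hxW, hx1, rfl⟩
      exact hcore x hxW hx1
    have hmem := sInf_mem_svalSq_set At u huortho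
    exact le_trans hqle (le_csSup (svalSq_bddAbove At (j + 1)) hmem)

/-- comparison of singular values under an ε-isometry. -/
lemma svalSq_le {n m d : ℕ} (ε : ℝ) (hε0 : 0 ≤ ε)
    (A : Matrix (Fin n) (Fin d) ℝ) (At : Matrix (Fin m) (Fin d) ℝ)
    (hiso : ∀ x : Fin d → ℝ, sqnorm2 (At.mulVec x) ≤ (1 + ε) * sqnorm2 (A.mulVec x))
    {j : ℕ} (hj : 0 < j) (hjd : j ≤ d) :
    svalSq At j ≤ (1 + ε) * svalSq A j := by
  have hε : (0:ℝ) < 1 + ε := by linarith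
  refine Real.sSup_le ?_ (mul_nonneg hε.le (svalSq_nonneg A hj hjd))
  rintro c ⟨W, hW, rfl⟩
  set TA := {r : ℝ | ∃ x ∈ W, sqnorm2 x = 1 ∧ r = sqnorm2 (A.mulVec x)} with hTA
  set TAt := {r : ℝ | ∃ x ∈ W, sqnorm2 x = 1 ∧ r = sqnorm2 (At.mulVec x)} with hTAt
  obtain ⟨x0, hx0W, hx01⟩ := exists_unit_vec W (hW ▸ hj)
  have hTAne : TA.Nonempty := ⟨_, x0, hx0W, hx01, rfl⟩
  have hstep : sInf TAt ≤ (1 + ε) * sInf TA := by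
    rw [← div_le_iff₀' hε] at *
    refine le_csInf hTAne ?_
    rintro r ⟨x, hxW, hx1, rfl⟩
    rw [div_le_iff₀' hε]
    refine csInf_le_of_le ⟨0, ?_⟩ ⟨x, hxW, hx1, rfl⟩ (hiso x)
    rintro s ⟨y, _, _, rfl⟩; exact sqnorm2_nonneg _
  have hInfTA : sInf TA ≤ svalSq A j :=
    le_csSup (svalSq_bddAbove A j) ⟨W, hW, rfl⟩
  calc sInf TAt ≤ (1 + ε) * sInf TA := hstep
    _ ≤ (1 + ε) * svalSq A j := mul_le_mul_of_nonneg_left hInfTA hε.le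

/-- relative error low rank approximation (PCA).
`V` has columns the top-k right singular vectors of `At`: orthonormal columns, each
column `j` being an eigenvector of `AtᵀAt` with eigenvalue the (j+1)-th largest `σ²`.
`‖A - A_k‖₂² = svalSq A (k+1)` is the square of the (k+1)-th largest singular value. -/
theorem stmt3 {n m d k : ℕ} (hk : k < d) (ε : ℝ) (hε0 : 0 ≤ ε) (hε1 : ε < 1)
    (A : Matrix (Fin n) (Fin d) ℝ) (At : Matrix (Fin m) (Fin d) ℝ)
    (hiso : ∀ x : Fin d → ℝ,
      (1 - ε) * sqnorm2 (A.mulVec x) ≤ sqnorm2 (At.mulVec x) ∧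
      sqnorm2 (At.mulVec x) ≤ (1 + ε) * sqnorm2 (A.mulVec x))
    (V : Matrix (Fin d) (Fin k) ℝ) (hVorth : Vᵀ * V = 1)
    (hVtop : ∀ j : Fin k,
      (Atᵀ * At).mulVec (fun i => V i j) = svalSq At ((j : ℕ) + 1) • (fun i => V i j)) :
    opNormSq (A - A * V * Vᵀ) ≤ ((1 + ε) / (1 - ε)) * svalSq A (k + 1) := by
  have h1ε : (0:ℝ) < 1 - ε := by linarith
  have hRHS0 : 0 ≤ ((1 + ε) / (1 - ε)) * svalSq A (k + 1) := by
    apply mul_nonneg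
    · positivity
    · exact svalSq_nonneg A (Nat.succ_pos k) hk
  refine Real.sSup_le ?_ hRHS0
  rintro c ⟨x, hx1, rfl⟩
  -- the residual vector
  set w : Fin d → ℝ := x - (V * Vᵀ).mulVec x with hw
  have hBx : (A - A * V * Vᵀ).mulVec x = A.mulVec w := by
    rw [sub_mulVec, hw]
    rw [Matrix.mul_assoc, ← mulVec_mulVec]
    rw [mulVec_sub]  -- A *ᵥ (x - ...) = A *ᵥ x - A *ᵥ ...
  -- Vᵀ w = 0
  have hVtw : Vᵀ.mulVec w = 0 := by
    rw [hw, mulVec_sub, mulVec_mulVec, ← Matrix.mul_assoc, hVorth, Matrix.one_mul, sub_self]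
  have hcol : ∀ jj : Fin k, (fun r => V r jj) ⬝ᵥ w = 0 := by
    intro jj
    have h := congrFun hVtw jj
    simpa [mulVec, dotProduct, transpose_apply] using h
  have hcolortho : ∀ i jj : Fin k,
      (fun r => V r i) ⬝ᵥ (fun r => V r jj) = if i = jj then 1 else 0 := by
    intro i jj
    have h := congrFun (congrFun hVorth i) jj
    simpa [Matrix.mul_apply, Matrix.one_apply, dotProduct, transpose_apply] using h
  set p := (V * Vᵀ).mulVec x with hp
  have hdotwp : w ⬝ᵥ p = 0 := by
    rw [hp, ← mulVec_mulVec, dotProduct_mulVec]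
    have hwV : w ᵥ* V = 0 := by
      rw [show V = Vᵀᵀ from (transpose_transpose V).symm, vecMul_transpose, hVtw]
    rw [hwV, zero_dotProduct]
  have hxwp : x = w + p := by rw [hw]; abel
  have hsplit : sqnorm2 x = sqnorm2 w + sqnorm2 p := by
    calc sqnorm2 x = (w + p) ⬝ᵥ (w + p) := by rw [sqnorm2_eq_dot, ← hxwp]
      _ = w ⬝ᵥ w + (w ⬝ᵥ p + (p ⬝ᵥ w + p ⬝ᵥ p)) := by
          rw [add_dotProduct, dotProduct_add, dotProduct_add]; ring
      _ = sqnorm2 w + sqnorm2 p := by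
          rw [dotProduct_comm p w, hdotwp, ← sqnorm2_eq_dot, ← sqnorm2_eq_dot]; ring
  have hwle : sqnorm2 w ≤ 1 := by
    have h0 := sqnorm2_nonneg p
    rw [hx1] at hsplit
    linarith
  rw [hBx]
  by_cases hw0 : w = 0
  · rw [hw0, mulVec_zero]
    have h0 : sqnorm2 (0 : Fin n → ℝ) = 0 := by simp [sqnorm2]
    rw [h0]
    exact hRHS0
  · have hsw := sqnorm2_pos hw0
    set s := sqnorm2 w with hs
    set wh : Fin d → ℝ := (Real.sqrt s)⁻¹ • w with hwh
    have hwh1 : sqnorm2 wh = 1 := by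
      rw [hwh, sqnorm2_smul, inv_pow, Real.sq_sqrt hsw.le, inv_mul_cancel₀ hsw.ne']
    have hwhv : ∀ jj : Fin k, (fun r => V r jj) ⬝ᵥ wh = 0 := by
      intro jj
      rw [hwh, dotProduct_smul, hcol jj, smul_zero]
    have hkey := key At (fun jj => fun r => V r jj) hcolortho hVtop wh hwh1 hwhv k le_rfl
    have hlow := (hiso wh).1
    have hcomp := svalSq_le ε hε0 A At (fun y => (hiso y).2) (Nat.succ_pos k) hk
    have hwrep : w = Real.sqrt s • wh := by
      rw [hwh, smul_smul, mul_inv_cancel₀ (Real.sqrt_ne_zero'.mpr hsw), one_smul]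
    have hAw : sqnorm2 (A.mulVec w) = s * sqnorm2 (A.mulVec wh) := by
      rw [hwrep, mulVec_smul, sqnorm2_smul, Real.sq_sqrt hsw.le]
    have h1 : sqnorm2 (A.mulVec wh) ≤ ((1 + ε) / (1 - ε)) * svalSq A (k + 1) := by
      rw [div_mul_eq_mul_div, le_div_iff₀ h1ε]
      calc sqnorm2 (A.mulVec wh) * (1 - ε) = (1 - ε) * sqnorm2 (A.mulVec wh) := mul_comm _ _
        _ ≤ sqnorm2 (At.mulVec wh) := hlow
        _ ≤ svalSq At (k + 1) := hkey
        _ ≤ (1 + ε) * svalSq A (k + 1) := hcomp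
    calc sqnorm2 (A.mulVec w) = s * sqnorm2 (A.mulVec wh) := hAw
      _ ≤ 1 * (((1 + ε) / (1 - ε)) * svalSq A (k + 1)) :=
          mul_le_mul hwle h1 (sqnorm2_nonneg _) zero_le_one
      _ = ((1 + ε) / (1 - ε)) * svalSq A (k + 1) := one_mul _
end

section
/- Let y ∈ ℝⁿ with ‖y‖₂ < ‖y‖₁/β, let S₁,…,S_r be a random partition of [n] into r bins (each index independently uniform among bins), and let γ_j = ∑_{i∈S_j}|y_i|. Fix k > 1 and let E be the event that at least r/k of the values γ_j are at most ‖y‖₁/(2r). Then P(E) ≤ exp(−β²/(8k) + (r/k)(1 + ln k)). -/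
/-!
If at least `r/k` bins are light, then some set `I` of `m = ⌈r/k⌉` bins has total mass at most
`m‖y‖₁/(2r)`, half its mean `(m/r)‖y‖₁`. That mass is a sum of independent nonnegative variables
`|y_i| · 1[σ_i ∈ I]`, and for nonnegative variables `e^{-s} ≤ 1 - s + s²/2` bounds the moment
generating function on the negative axis by second moments alone; the Chernoff bound then gives
probability at most `exp (-(m/r) ‖y‖₁² / (8‖y‖₂²)) ≤ exp (-(m/r) β²/8)`. A union bound over the
`C(r, m) ≤ (e k)^m` choices of `I` finishes the proof when `β² > 8r(1 + log k)`; otherwise the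
claimed bound is at least `1`.
-/

open MeasureTheory ProbabilityTheory Finset Real
open scoped ENNReal

lemma Real.exp_neg_le_one_sub_add_sq_div_two {s : ℝ} (hs : 0 ≤ s) :
    exp (-s) ≤ 1 - s + s ^ 2 / 2 := by
  -- `(1 - s + s²/2)(1 + s + s²/2) = 1 + s⁴/4`
  rw [exp_neg, inv_le_iff_one_le_mul₀' (exp_pos s)]
  nlinarith [quadratic_le_exp_of_nonneg hs, pow_nonneg hs 4, sq_nonneg (s - 1)]

lemma Nat.choose_le_exp_one_mul_pow {n m : ℕ} {k : ℝ} (hk : 0 ≤ k) (hnm : n ≤ k * m) :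
    (n.choose m : ℝ) ≤ (exp 1 * k) ^ m := by
  calc (n.choose m : ℝ) ≤ (n : ℝ) ^ m / m.factorial := Nat.choose_le_pow_div m n
    _ ≤ (k * m) ^ m / m.factorial := by gcongr
    _ = k ^ m * ((m : ℝ) ^ m / m.factorial) := by rw [mul_pow, mul_div_assoc]
    _ ≤ k ^ m * exp m := by gcongr; exact pow_div_factorial_le_exp m (Nat.cast_nonneg m) m
    _ = (exp 1 * k) ^ m := by rw [mul_pow, ← exp_nat_mul, mul_one, mul_comm]

lemma exp_one_mul_pow_mul_exp_le {k r β : ℝ} {m : ℕ} (hk : 0 < k) (hr : 0 < r) (hm : r / k ≤ m)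
    (hβ : 8 * r * (1 + log k) ≤ β ^ 2) :
    (exp 1 * k) ^ m * exp (-(m / r) * (β ^ 2 / 8))
      ≤ exp (-β ^ 2 / (8 * k) + r / k * (1 + log k)) := by
  have ha : 1 + log k - β ^ 2 / (8 * r) ≤ 0 := by
    rw [sub_nonpos, le_div_iff₀ (by positivity)]; linarith
  calc (exp 1 * k) ^ m * exp (-(m / r) * (β ^ 2 / 8))
        = exp (m * (1 + log k - β ^ 2 / (8 * r))) := by
        rw [show exp 1 * k = exp (1 + log k) by rw [exp_add, exp_log hk], ← exp_nat_mul, ← exp_add]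
        congr 1
        field_simp
        ring
    _ ≤ exp (r / k * (1 + log k - β ^ 2 / (8 * r))) :=
        exp_le_exp.2 (mul_le_mul_of_nonpos_right hm ha)
    _ = exp (-β ^ 2 / (8 * k) + r / k * (1 + log k)) := by
        congr 1
        field_simp
        ring

lemma Finset.exists_card_eq_sum_filter_mem_le {ι κ : Type*} [Fintype ι] [Fintype κ] [DecidableEq κ]
    (σ : ι → κ) (w : ι → ℝ) (θ : ℝ) {m : ℕ} (hm : m ≤ #{j | ∑ i with σ i = j, w i ≤ θ}) :
    ∃ I : Finset κ, #I = m ∧ ∑ i with σ i ∈ I, w i ≤ m * θ := by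
  obtain ⟨I, hIsub, rfl⟩ := exists_subset_card_eq hm
  refine ⟨I, rfl, ?_⟩
  calc ∑ i with σ i ∈ I, w i = ∑ j ∈ I, ∑ i with σ i = j, w i := by
        rw [← sum_fiberwise_of_maps_to (fun i hi => (mem_filter.1 hi).2)]
        refine sum_congr rfl fun j hj => ?_
        rw [filter_filter]
        congr 1
        ext i
        simp only [mem_filter, mem_univ, true_and, and_iff_right_iff_imp]
        rintro rfl
        exact hj
    _ ≤ ∑ _j ∈ I, θ := sum_le_sum fun j hj => (mem_filter.1 (hIsub hj)).2
    _ = #I * θ := by rw [sum_const, nsmul_eq_mul]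

namespace ProbabilityTheory

variable {Ω : Type*} [MeasurableSpace Ω] {μ : Measure Ω}

lemma mgf_neg_le_exp_of_nonneg [IsProbabilityMeasure μ] {X : Ω → ℝ} (hX : MemLp X 2 μ)
    (hnn : 0 ≤ᵐ[μ] X) {t : ℝ} (ht : 0 ≤ t) :
    mgf X μ (-t) ≤ exp (-t * μ[X] + t ^ 2 / 2 * μ[X ^ 2]) := by
  have hint : Integrable X μ := hX.integrable one_le_two
  have hint2 : Integrable (X ^ 2) μ := hX.integrable_sq
  calc mgf X μ (-t) ≤ μ[fun ω => 1 - t * X ω + t ^ 2 / 2 * (X ^ 2) ω] := by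
        refine integral_mono_of_nonneg (ae_of_all _ fun ω => (exp_pos _).le) (by fun_prop) ?_
        filter_upwards [hnn] with ω hω
        have := exp_neg_le_one_sub_add_sq_div_two (mul_nonneg ht hω)
        simp only [Pi.pow_apply]
        rw [neg_mul]
        linarith [show (t * X ω) ^ 2 = t ^ 2 * X ω ^ 2 by ring]
    _ = 1 - t * μ[X] + t ^ 2 / 2 * μ[X ^ 2] := by
        rw [integral_add (by fun_prop) (by fun_prop), integral_sub (by fun_prop) (by fun_prop),
          integral_const_mul, integral_const_mul]
        simp
    _ ≤ exp (-t * μ[X] + t ^ 2 / 2 * μ[X ^ 2]) := by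
        linarith [add_one_le_exp (-t * μ[X] + t ^ 2 / 2 * μ[X ^ 2])]

theorem measureReal_sum_le_sum_integral_sub_le {ι : Type*} {X : ι → Ω → ℝ}
    (hindep : iIndepFun X μ) (hL2 : ∀ i, MemLp (X i) 2 μ) (hnn : ∀ i ω, 0 ≤ X i ω)
    (s : Finset ι) {ε : ℝ} (hε : 0 ≤ ε) :
    μ.real {ω | ∑ i ∈ s, X i ω ≤ ∑ i ∈ s, μ[X i] - ε}
      ≤ exp (-ε ^ 2 / (2 * ∑ i ∈ s, μ[X i ^ 2])) := by
  have := hindep.isProbabilityMeasure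
  set v := ∑ i ∈ s, μ[X i ^ 2] with hv_def
  have hv : 0 ≤ v := sum_nonneg fun i _ => integral_nonneg fun ω => sq_nonneg (X i ω)
  set t := ε / v
  have ht : 0 ≤ t := div_nonneg hε hv
  have hmeas : ∀ i, AEStronglyMeasurable (X i) μ := fun i => (hL2 i).aestronglyMeasurable
  have hint : Integrable (fun ω => exp (-t * (∑ i ∈ s, X i) ω)) μ := by
    refine Integrable.of_bound (C := 1) (by fun_prop) (ae_of_all _ fun ω => ?_)
    have : 0 ≤ (∑ i ∈ s, X i) ω := by rw [Finset.sum_apply]; exact sum_nonneg fun i _ => hnn i ω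
    rw [norm_of_nonneg (exp_pos _).le, exp_le_one_iff, neg_mul, neg_nonpos]
    exact mul_nonneg ht this
  calc μ.real {ω | ∑ i ∈ s, X i ω ≤ ∑ i ∈ s, μ[X i] - ε}
      ≤ exp (-(-t) * (∑ i ∈ s, μ[X i] - ε)) * mgf (∑ i ∈ s, X i) μ (-t) := by
        simpa only [Finset.sum_apply] using
          measure_le_le_exp_mul_mgf _ (neg_nonpos.2 ht) hint
    _ ≤ exp (t * (∑ i ∈ s, μ[X i] - ε)) * ∏ i ∈ s, exp (-t * μ[X i] + t ^ 2 / 2 * μ[X i ^ 2]) := by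
        rw [neg_neg, hindep.mgf_sum₀ (fun i => (hmeas i).aemeasurable)]
        gcongr with i
        · exact fun i _ => mgf_nonneg
        · exact mgf_neg_le_exp_of_nonneg (hL2 i) (ae_of_all _ (hnn i)) ht
    _ = exp (-t * ε + t ^ 2 / 2 * v) := by
        rw [← exp_sum, ← exp_add, sum_add_distrib, ← mul_sum, ← mul_sum, ← hv_def]
        ring_nf
    _ = exp (-ε ^ 2 / (2 * v)) := by
        rcases hv.eq_or_lt with hv0 | hv0
        · simp [t, ← hv0]
        · congr 1
          simp only [t]
          field_simp
          ring

lemma integral_comp_of_map_eq_smul_count {α : Type*} [Fintype α] [MeasurableSpace α]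
    [MeasurableSingletonClass α] {Y : Ω → α} (hY : Measurable Y) {c : ℝ≥0∞}
    (hmap : μ.map Y = c • Measure.count) (f : α → ℝ) :
    ∫ ω, f (Y ω) ∂μ = c.toReal * ∑ a, f a := by
  rw [← integral_map hY.aemeasurable (measurable_of_finite f).aestronglyMeasurable, hmap,
    integral_smul_measure, integral_count, smul_eq_mul]

theorem measureReal_sum_filter_mem_le {ι : Type*} [Fintype ι] {r : ℕ} (σ : Ω → ι → Fin r)
    (hmeas : ∀ i, Measurable fun ω => σ ω i) (hindep : iIndepFun (fun i ω => σ ω i) μ)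
    (hunif : ∀ i, μ.map (fun ω => σ ω i) = (r : ℝ≥0∞)⁻¹ • Measure.count)
    {w : ι → ℝ} (hw : ∀ i, 0 ≤ w i) (I : Finset (Fin r)) :
    μ.real {ω | ∑ i with σ ω i ∈ I, w i ≤ #I * ((∑ i, w i) / (2 * r))}
      ≤ exp (-(#I / r) * ((∑ i, w i) ^ 2 / (∑ i, w i ^ 2) / 8)) := by
  have := hindep.isProbabilityMeasure
  set p : ℝ := #I / r
  set X : ι → Ω → ℝ := fun i ω => if σ ω i ∈ I then w i else 0
  have hmean : ∀ i, μ[X i] = p * w i := fun i => by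
    rw [integral_comp_of_map_eq_smul_count (hmeas i) (hunif i) fun j => if j ∈ I then w i else 0]
    simp [p, sum_ite_mem, div_eq_inv_mul, mul_assoc]
  have hsecond : ∀ i, μ[X i ^ 2] = p * w i ^ 2 := fun i => by
    have := integral_comp_of_map_eq_smul_count (hmeas i) (hunif i)
      fun j => if j ∈ I then w i ^ 2 else 0
    simp only [Pi.pow_apply, X, ite_pow, zero_pow two_ne_zero]
    rw [this]
    simp [p, sum_ite_mem, div_eq_inv_mul, mul_assoc]
  have hXmeas : ∀ i, Measurable (X i) := fun i =>
    (measurable_of_finite fun j : Fin r => if j ∈ I then w i else 0).comp (hmeas i)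
  have hXindep : iIndepFun X μ :=
    hindep.comp (fun i j => if j ∈ I then w i else 0) fun i => measurable_of_finite _
  have hXL2 : ∀ i, MemLp (X i) 2 μ := fun i =>
    MemLp.of_bound (hXmeas i).aestronglyMeasurable (w i)
      (ae_of_all _ fun ω => by by_cases h : σ ω i ∈ I <;> simp [X, h, abs_of_nonneg (hw i), hw i])
  have hXnn : ∀ i ω, 0 ≤ X i ω := fun i ω => by
    dsimp only [X]; split_ifs; exacts [hw i, le_rfl]
  have hL : 0 ≤ ∑ i, w i := sum_nonneg fun i _ => hw i
  have := measureReal_sum_le_sum_integral_sub_le hXindep hXL2 hXnn univ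
    (ε := p * (∑ i, w i) / 2) (by positivity)
  simp only [hmean, hsecond, ← mul_sum] at this
  convert this using 3
  · funext ω
    rw [sum_filter]
    congr 1
    simp only [p]
    ring
  · rcases eq_or_ne p 0 with hp | hp
    · simp [hp]
    · field_simp
      ring

theorem measureReal_le_card_light_bins_le {ι : Type*} [Fintype ι] {r : ℕ} (σ : Ω → ι → Fin r)
    (hmeas : ∀ i, Measurable fun ω => σ ω i) (hindep : iIndepFun (fun i ω => σ ω i) μ)
    (hunif : ∀ i, μ.map (fun ω => σ ω i) = (r : ℝ≥0∞)⁻¹ • Measure.count)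
    {w : ι → ℝ} (hw : ∀ i, 0 ≤ w i) (m : ℕ) :
    μ.real {ω | m ≤ #{j | ∑ i with σ ω i = j, w i ≤ (∑ i, w i) / (2 * r)}}
      ≤ r.choose m * exp (-(m / r) * ((∑ i, w i) ^ 2 / (∑ i, w i ^ 2) / 8)) := by
  have := hindep.isProbabilityMeasure
  have hcover : {ω | m ≤ #{j | ∑ i with σ ω i = j, w i ≤ (∑ i, w i) / (2 * r)}} ⊆
      ⋃ I ∈ powersetCard m univ, {ω | ∑ i with σ ω i ∈ I, w i ≤ #I * ((∑ i, w i) / (2 * r))} := by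
    intro ω hω
    obtain ⟨I, hI, hsum⟩ := exists_card_eq_sum_filter_mem_le (σ ω) w _ hω
    exact Set.mem_biUnion (mem_powersetCard.2 ⟨subset_univ I, hI⟩) (by simpa [hI] using hsum)
  calc μ.real _
      ≤ ∑ I ∈ powersetCard m univ,
          μ.real {ω | ∑ i with σ ω i ∈ I, w i ≤ #I * ((∑ i, w i) / (2 * r))} :=
        (measureReal_mono hcover (measure_ne_top _ _)).trans (measureReal_biUnion_finset_le _ _)
    _ ≤ ∑ _I ∈ powersetCard m univ, exp (-(m / r) * ((∑ i, w i) ^ 2 / (∑ i, w i ^ 2) / 8)) :=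
        sum_le_sum fun I hI => by
          simpa only [(mem_powersetCard.1 hI).2] using
            measureReal_sum_filter_mem_le σ hmeas hindep hunif hw I
    _ = _ := by simp

end ProbabilityTheory

lemma sq_lt_sq_sum_abs_div_sum_sq {ι : Type*} [Fintype ι] {y : ι → ℝ} {β : ℝ} (hβ : 0 < β)
    (h : √(∑ i, y i ^ 2) < (∑ i, |y i|) / β) :
    β ^ 2 < (∑ i, |y i|) ^ 2 / ∑ i, y i ^ 2 := by
  have hlt : √(∑ i, y i ^ 2) * β < ∑ i, |y i| := (lt_div_iff₀ hβ).1 h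
  have hL : 0 < ∑ i, |y i| := lt_of_le_of_lt (by positivity) hlt
  obtain ⟨i, -, hi⟩ := exists_lt_of_sum_lt (f := fun _ => (0 : ℝ)) (by simpa using hL)
  have hV : 0 < ∑ i, y i ^ 2 :=
    sum_pos' (fun i _ => sq_nonneg _) ⟨i, mem_univ _, by rw [← sq_abs]; exact pow_pos hi 2⟩
  have hsq := pow_lt_pow_left₀ hlt (by positivity) two_ne_zero
  rw [mul_pow, Real.sq_sqrt hV.le] at hsq
  rw [lt_div_iff₀ hV]
  linarith

/-- joint lower-tail bound for a random partition.  `E` is the event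
that at least `r/k` of the bin-masses `γ_j = ∑_{i ∈ S_j} |y_i|` are at most `‖y‖₁/(2r)`. -/
theorem stmt10 {Ω : Type*} [MeasurableSpace Ω] (P : Measure Ω) [IsProbabilityMeasure P]
    (n r : ℕ) (hr : 0 < r) (y : Fin n → ℝ) (β : ℝ) (hβ : 0 < β)
    (σ : Ω → Fin n → Fin r) (hmeas : ∀ i, Measurable fun ω => σ ω i)
    (hindep : iIndepFun (fun i ω => σ ω i) P)
    (hunif : ∀ i, Measure.map (fun ω => σ ω i) P = (r : ENNReal)⁻¹ • Measure.count)
    (hdense : Real.sqrt (∑ i, (y i) ^ 2) < (∑ i, |y i|) / β)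
    (k : ℝ) (hk : 1 < k) :
    P {ω | (r : ℝ) / k ≤
        ((Finset.univ.filter fun j : Fin r =>
            (∑ i ∈ Finset.univ.filter (fun i => σ ω i = j), |y i|)
              ≤ (∑ i, |y i|) / (2 * r)).card : ℝ)}
      ≤ ENNReal.ofReal (Real.exp (-β ^ 2 / (8 * k) + (r / k) * (1 + Real.log k))) := by
  have hk0 : 0 < k := one_pos.trans hk
  have hr0 : (0 : ℝ) < r := Nat.cast_pos.2 hr
  rcases le_or_gt (β ^ 2) (8 * r * (1 + Real.log k)) with hsmall | hlarge
  · refine prob_le_one.trans (ENNReal.one_le_ofReal.2 (Real.one_le_exp ?_))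
    rw [show -β ^ 2 / (8 * k) + r / k * (1 + Real.log k)
        = (8 * r * (1 + Real.log k) - β ^ 2) / (8 * k) by field_simp; ring]
    exact div_nonneg (sub_nonneg.2 hsmall) (by positivity)
  have hβL := sq_lt_sq_sum_abs_div_sum_sq hβ hdense
  set m := ⌈(r : ℝ) / k⌉₊
  have hrkm : (r : ℝ) ≤ k * m := (div_le_iff₀' hk0).1 (Nat.le_ceil _)
  rw [← ofReal_measureReal (measure_ne_top P _)]
  gcongr
  calc P.real _
      ≤ P.real {ω | m ≤ #{j | ∑ i with σ ω i = j, |y i| ≤ (∑ i, |y i|) / (2 * r)}} :=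
        measureReal_mono (fun ω hω => Nat.ceil_le.2 hω) (measure_ne_top _ _)
    _ ≤ r.choose m * exp (-(m / r) * ((∑ i, |y i|) ^ 2 / (∑ i, |y i| ^ 2) / 8)) :=
        measureReal_le_card_light_bins_le σ hmeas hindep hunif (fun i => abs_nonneg (y i)) m
    _ ≤ (exp 1 * k) ^ m * exp (-(m / r) * (β ^ 2 / 8)) := by
        simp only [sq_abs, neg_mul]
        gcongr
        exact Nat.choose_le_exp_one_mul_pow hk0.le hrkm
    _ ≤ _ := exp_one_mul_pow_mul_exp_le hk0 hr0 (Nat.le_ceil _) hlarge.le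
end
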